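/- arXiv:1207.5240 — 4 statements merged into one kernel-verified Lean document; each statement's English description precedes it below -/
import Mathlib

section
/- Let C_{k+1} act on words of length k+1 over Z/mZ by cyclic left rotation, and let W be the set of such words with sum ≡ m-1 (mod m). Then for every divisor d of k+1, the number of words in W fixed by rotation by d positions equals W(ζ^d), where ζ is a primitive (k+1)-th root of unity and W(q) = ∏_{i=1}^{k} (1-q^{mi})/(1-q^i). That is, (W, W(q), C_{k+1}) exhibits the cyclic sieving phenomenon. -/
/-!
A word fixed by rotation by `d` is `d`-periodic, so it is determined by its first `d` letters `v`,
and its letter sum is `t • ∑ v` where `k + 1 = t * d`. Hence the fixed words number `m ^ (d - 1)`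
times the number of `s : ZMod m` with `t * s = -1`, which is `1` or `0` according as `t` is
coprime to `m` or not.

On the other side `η = ζ ^ d` is a primitive `t`-th root of unity and the factor
`[m]_{η^i} = ∑ j < m, η ^ (i * j)` is `t`-periodic in `i`. The factors with `t ∣ i` equal `m`, and
each full period of the others contributes `∏ r ∈ [1, t), [m]_{η^r}`. Since
`(1 - x) [m]_x = 1 - x ^ m` and `∏ r ∈ [1, t), (1 - μ ^ r) = t` for every primitive `t`-th root
`μ`, this product is `1` when `η ^ m` is again primitive, i.e. when `t` and `m` are coprime;
otherwise, with `g = gcd t m`, the factor at `r = t / g` vanishes because `η ^ r` is a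
primitive `g`-th root of unity and `g ∣ m`.
-/

open Finset Function
open Fin.NatCast

@[to_additive sum_range_mul]
theorem Function.Periodic.prod_range_mul {M : Type*} [CommMonoid M] {f : ℕ → M} {c : ℕ}
    (h : Periodic f c) (n : ℕ) : ∏ i ∈ range (n * c), f i = (∏ i ∈ range c, f i) ^ n := by
  induction n with
  | zero => simp
  | succ n ih =>
    rw [Nat.succ_mul, prod_range_add, ih, pow_succ]
    congr 1
    refine prod_congr rfl fun i _ => ?_
    rw [add_comm]
    exact_mod_cast h.nat_mul n i

section PeriodicWords

variable {α : Type*} {n d : ℕ} [NeZero n]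

theorem periodic_natCast_of_forall_add_ofNat_eq {w : Fin n → α}
    (hw : ∀ i, w (i + Fin.ofNat n d) = w i) : Periodic (fun j : ℕ => w j) d := fun j => by
  show w ((j + d : ℕ) : Fin n) = w j
  rw [Nat.cast_add]
  exact hw j

theorem Function.Periodic.apply_val_add_ofNat {u : ℕ → α} (hu : Periodic u d) (hd : d ∣ n)
    (i : Fin n) : u (i + Fin.ofNat n d).val = u i.val := by
  obtain ⟨t, rfl⟩ := hd
  have hn : Periodic u (d * t) := by simpa only [Nat.cast_id, mul_comm] using hu.nat_mul t
  rw [Fin.val_add, Fin.val_ofNat, Nat.add_mod_mod, hn.map_mod_nat, hu]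

def periodicWordEquiv (hd : d ∣ n) :
    {w : Fin n → α // ∀ i, w (i + Fin.ofNat n d) = w i} ≃ (Fin d → α) where
  toFun w r := w.1 (r : ℕ)
  invFun v :=
    let u (j : ℕ) := v ⟨j % d, Nat.mod_lt _ (Nat.pos_of_dvd_of_pos hd n.pos_of_neZero)⟩
    have hu : Periodic u d := fun j => by simp only [u, Nat.add_mod_right]
    ⟨fun i => u i.val, hu.apply_val_add_ofNat hd⟩
  left_inv w := by
    ext i
    simpa only [Fin.cast_val_eq_self] using
      (periodic_natCast_of_forall_add_ofNat_eq w.2).map_mod_nat i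
  right_inv v := by
    ext r
    have hr : (r : ℕ) < n := r.2.trans_le (Nat.le_of_dvd n.pos_of_neZero hd)
    simp only [Fin.val_natCast, Nat.mod_eq_of_lt hr, Nat.mod_eq_of_lt r.2]

theorem sum_eq_nsmul_sum_of_forall_add_ofNat_eq [AddCommMonoid α] {t : ℕ} (hn : n = t * d)
    {w : Fin n → α} (hw : ∀ i, w (i + Fin.ofNat n d) = w i) :
    ∑ i, w i = t • ∑ r : Fin d, w (r : ℕ) := by
  have hper := periodic_natCast_of_forall_add_ofNat_eq hw
  subst hn
  calc ∑ i, w i = ∑ j ∈ range (t * d), w j := by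
        rw [← Fin.sum_univ_eq_sum_range]; simp only [Fin.cast_val_eq_self]
    _ = t • ∑ r : Fin d, w (r : ℕ) := by
        rw [hper.sum_range_mul t, Fin.sum_univ_eq_sum_range (fun j => w j)]

theorem card_sum_and_forall_add_ofNat_eq [AddCommMonoid α] {t : ℕ} (hn : n = t * d)
    (p : α → Prop) :
    Nat.card {w : Fin n → α // p (∑ i, w i) ∧ ∀ i, w (i + Fin.ofNat n d) = w i}
      = Nat.card {v : Fin d → α // p (t • ∑ r, v r)} := by
  refine Nat.card_congr <| (Equiv.subtypeEquivRight fun _ => and_comm).trans <|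
    (Equiv.subtypeSubtypeEquivSubtypeInter _ _).symm.trans <|
    Equiv.subtypeEquiv (periodicWordEquiv (Dvd.intro_left t hn.symm)) fun w => ?_
  rw [sum_eq_nsmul_sum_of_forall_add_ofNat_eq hn w.2]
  rfl

end PeriodicWords

theorem Nat.card_fin_succ_fun_sum {G : Type*} [AddCommGroup G] (e : ℕ) (p : G → Prop) :
    Nat.card {v : Fin (e + 1) → G // p (∑ r, v r)} = Nat.card G ^ e * Nat.card {g // p g} := by
  let E : {v : Fin (e + 1) → G // p (∑ r, v r)} ≃ (Fin e → G) × {g // p g} :=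
    { toFun v := (Fin.tail v.1, ⟨∑ r, v.1 r, v.2⟩)
      invFun u := ⟨Fin.cons (u.2.1 - ∑ r, u.1 r) u.1, by simpa [Fin.sum_cons] using u.2.2⟩
      left_inv v := by
        ext1
        simp [Fin.sum_univ_succ, Fin.tail, Fin.cons_self_tail]
      right_inv u := by simp [Fin.sum_cons] }
  rw [Nat.card_congr E, Nat.card_prod, Nat.card_fun, Nat.card_fin]

open Classical in
theorem Nat.card_mul_eq_neg_one {R : Type*} [CommRing R] (a : R) :
    Nat.card {x : R // a * x = -1} = if IsUnit a then 1 else 0 := by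
  split_ifs with ha
  · obtain ⟨u, rfl⟩ := ha
    have : Unique {x : R // u * x = -1} :=
      { default := ⟨↑u⁻¹ * -1, u.mul_inv_cancel_left _⟩
        uniq x := Subtype.ext <| (u.eq_inv_mul_iff_mul_eq).2 x.2 }
    exact Nat.card_unique
  · have : IsEmpty {x : R // a * x = -1} :=
      ⟨fun x => ha (IsUnit.of_mul_eq_one (-x.1) (by rw [mul_neg, x.2, neg_neg]))⟩
    exact Nat.card_of_isEmpty

theorem card_fixed_words {m k e t : ℕ} (hm : 1 ≤ m) (hk : k + 1 = t * (e + 1)) :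
    Nat.card {w : Fin (k + 1) → ZMod m //
        (∑ i, w i = ((m - 1 : ℕ) : ZMod m)) ∧ ∀ i, w (i + Fin.ofNat (k + 1) (e + 1)) = w i}
      = m ^ e * if t.Coprime m then 1 else 0 := by
  have hm1 : ((m - 1 : ℕ) : ZMod m) = -1 := by
    rw [Nat.cast_sub hm, Nat.cast_one, ZMod.natCast_self, zero_sub]
  rw [hm1]
  refine (card_sum_and_forall_add_ofNat_eq hk (· = -1)).trans <|
    (Nat.card_fin_succ_fun_sum e (fun g => t • g = -1)).trans ?_
  simp only [Nat.card_zmod, nsmul_eq_mul, Nat.card_mul_eq_neg_one, ZMod.isUnit_iff_coprime]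

namespace IsPrimitiveRoot

variable {R : Type*} [CommRing R] [IsDomain R] [CharZero R] {η : R} {s : ℕ}

theorem prod_geom_sum_pow_succ (hη : IsPrimitiveRoot η (s + 1)) (m : ℕ) :
    ∏ r ∈ range s, ∑ j ∈ range m, (η ^ (r + 1)) ^ j = if (s + 1).Coprime m then 1 else 0 := by
  split_ifs with hcop
  · have hηm : IsPrimitiveRoot (η ^ m) (s + 1) := hη.pow_of_coprime m hcop.symm
    have key : (∏ r ∈ range s, (1 - η ^ (r + 1))) *
        ∏ r ∈ range s, ∑ j ∈ range m, (η ^ (r + 1)) ^ j = ∏ r ∈ range s, (1 - η ^ (r + 1)) := by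
      rw [← prod_mul_distrib]
      simp only [mul_neg_geom_sum, pow_right_comm _ _ m]
      rw [hηm.prod_one_sub_pow_eq_order, hη.prod_one_sub_pow_eq_order]
    rw [hη.prod_one_sub_pow_eq_order] at key
    exact (mul_eq_left₀ (Nat.cast_add_one_ne_zero s)).1 key
  · set g := (s + 1).gcd m
    have hg : 1 < g := by
      have : 0 < g := Nat.gcd_pos_of_pos_left m s.succ_pos
      have : g ≠ 1 := hcop
      omega
    obtain ⟨r, hr⟩ : ∃ r, (s + 1) / g = r + 1 := Nat.exists_eq_succ_of_ne_zero
      (Nat.div_pos (Nat.gcd_le_left m s.succ_pos) (by omega : 0 < g)).ne'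
    have hsg : s + 1 = (r + 1) * g := by rw [← hr, Nat.div_mul_cancel (Nat.gcd_dvd_left _ _)]
    have hx : IsPrimitiveRoot (η ^ (r + 1)) g := hη.pow s.succ_pos hsg
    refine prod_eq_zero (i := r) (mem_range.2 (by nlinarith)) ?_
    have h1 : 1 - η ^ (r + 1) ≠ 0 := sub_ne_zero.2 (hx.ne_one hg).symm
    have h2 : (η ^ (r + 1)) ^ m = 1 := (hx.pow_eq_one_iff_dvd m).2 (Nat.gcd_dvd_right _ _)
    have := mul_neg_geom_sum (η ^ (r + 1)) m
    rw [h2, sub_self] at this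
    exact (mul_eq_zero.1 this).resolve_left h1

theorem prod_Icc_geom_sum {k e m : ℕ} (hη : IsPrimitiveRoot η (s + 1))
    (hk : k + 1 = (e + 1) * (s + 1)) (hm : m ≠ 0) :
    ∏ i ∈ Icc 1 k, ∑ j ∈ range m, η ^ (j * i) = m ^ e * if (s + 1).Coprime m then 1 else 0 := by
  set F : ℕ → R := fun i => ∑ j ∈ range m, (η ^ i) ^ j
  have hF : Periodic F (s + 1) := fun i => by simp only [F, pow_add, hη.pow_eq_one, mul_one]
  have hF0 : F 0 = m := by simp [F]
  -- the factor `F 0 = m` completes `Icc 1 k` to `e + 1` full periods of `F`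
  have hprod := hF.prod_range_mul (e + 1)
  rw [← hk, prod_range_succ', prod_range_succ', hF0, hη.prod_geom_sum_pow_succ] at hprod
  have hIcc : ∏ i ∈ Icc 1 k, ∑ j ∈ range m, η ^ (j * i) = ∏ i ∈ range k, F (i + 1) := by
    rw [range_eq_Ico k, prod_Ico_add' F, zero_add, Ico_add_one_right_eq_Icc]
    refine prod_congr rfl fun i _ => ?_
    simp only [F, ← pow_mul, mul_comm]
  rw [hIcc]
  refine mul_right_cancel₀ (Nat.cast_ne_zero.2 hm) (hprod.trans ?_)
  split_ifs <;> simp [pow_succ]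

end IsPrimitiveRoot

/-- The cyclic sieving phenomenon for words of length `k+1` over `ℤ/mℤ`
with letter sum `m-1`, under cyclic rotation. -/
theorem csp_words (m k : ℕ) (hm : 1 ≤ m) (ζ : ℂ) (hζ : IsPrimitiveRoot ζ (k + 1))
    (d : ℕ) (hd : d ∣ (k + 1)) :
    (Nat.card {w : Fin (k + 1) → ZMod m //
        (∑ i, w i = ((m - 1 : ℕ) : ZMod m)) ∧ ∀ i, w (i + (Fin.ofNat (k + 1) d : Fin (k + 1))) = w i} : ℂ)
      = ∏ i ∈ Finset.Icc 1 k, ∑ j ∈ Finset.range m, (ζ ^ d) ^ (j * i) := by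
  obtain ⟨t, hkt⟩ := hd
  obtain ⟨e, rfl⟩ : ∃ e, d = e + 1 := Nat.exists_eq_succ_of_ne_zero (by rintro rfl; simp at hkt)
  obtain ⟨s, rfl⟩ : ∃ s, t = s + 1 := Nat.exists_eq_succ_of_ne_zero (by rintro rfl; simp at hkt)
  rw [card_fixed_words hm (hkt.trans (mul_comm _ _)),
    (hζ.pow k.succ_pos hkt).prod_Icc_geom_sum hkt (by omega)]
  push_cast
  rfl
end

section
/- Define a map p from words x = (x_1,...,x_{k+1}) over Z/mZ to pairs (w, b) as follows: set x_0 = 0, compute t_i = x_i - x_{i-1} (in Z/mZ) for i = 1,...,k+1, and place t_i into the block labeled x_{i-1}, where blocks are m lists indexed by Z/mZ and within each block letters are appended in order of increasing i. Then p is injective: distinct words x yield distinct outputs (w, b). -/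
/-- `Xseq m k x` is the sequence `x₀ = 0, x₁, …, x_{k+1}` (and `0` beyond). -/
def Xseq (m k : ℕ) (x : Fin (k + 1) → ZMod m) : ℕ → ZMod m :=
  fun i => if h : 1 ≤ i ∧ i ≤ k + 1 then x ⟨i - 1, by omega⟩ else 0

/-- The map `p` sends a word `x` to the partitioned word whose block `b` consists of
the letters `tᵢ = xᵢ - x_{i-1}` for those `i` with `x_{i-1} = b`, in increasing order
of `i` (here the index `i` of `List.range (k+1)` corresponds to `tᵢ₊₁`). -/
def pMap (m k : ℕ) (x : Fin (k + 1) → ZMod m) : ZMod m → List (ZMod m) :=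
  fun b => ((List.range (k + 1)).filter (fun i => decide (Xseq m k x i = b))).map
    (fun i => Xseq m k x (i + 1) - Xseq m k x i)

/-- The map `p` is injective: distinct words yield distinct partitioned words. -/
theorem pMap_injective (m k : ℕ) (hm : 1 ≤ m) :
    Function.Injective (pMap m k) := by
  intro x y hxy
  have key : ∀ j, ∀ i ≤ j, Xseq m k x i = Xseq m k y i := by
    intro j
    induction j with
    | zero =>
      intro i hi
      interval_cases i
      simp [Xseq]
    | succ j ih =>
      intro i hi
      rcases Nat.lt_or_ge i (j + 1) with h | h
      · exact ih i (by omega)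
      · have hij : i = j + 1 := by omega
        subst hij
        by_cases hk : j + 1 ≤ k + 1
        · -- main case
          have hjk : j ≤ k := by omega
          set b := Xseq m k x j with hbdef
          have hby : Xseq m k y j = b := (ih j le_rfl).symm
          have h1 : k + 1 = (j + 1) + (k - j) := by omega
          have hcong := congrFun hxy b
          unfold pMap at hcong
          rw [h1, List.range_add, List.filter_append, List.filter_append,
            List.map_append, List.map_append, List.range_succ,
            List.filter_append, List.filter_append] at hcong
          have hpj_x : (List.filter (fun i => decide (Xseq m k x i = b)) [j]) = [j] := by
            simp [hbdef]
          have hpj_y : (List.filter (fun i => decide (Xseq m k y i = b)) [j]) = [j] := by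
            simp [hby]
          rw [hpj_x, hpj_y] at hcong
          have hpref : (List.range j).filter (fun i => decide (Xseq m k x i = b)) =
              (List.range j).filter (fun i => decide (Xseq m k y i = b)) := by
            apply List.filter_congr
            intro a ha
            rw [ih a (Nat.le_of_lt (List.mem_range.mp ha))]
          rw [hpref] at hcong
          have hmapeq : ((List.range j).filter (fun i => decide (Xseq m k y i = b))).map
              (fun i => Xseq m k x (i + 1) - Xseq m k x i) =
              ((List.range j).filter (fun i => decide (Xseq m k y i = b))).map
              (fun i => Xseq m k y (i + 1) - Xseq m k y i) := by
            apply List.map_congr_left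
            intro a ha
            have ha' : a < j := List.mem_range.mp (List.mem_of_mem_filter ha)
            rw [ih a (by omega), ih (a + 1) (by omega)]
          rw [List.map_append, List.map_append, hmapeq, List.append_assoc,
            List.append_assoc] at hcong
          have := List.append_cancel_left hcong
          simp only [List.map_cons, List.map_nil, List.singleton_append,
            List.cons_append, List.cons.injEq] at this
          have heq := this.1
          rw [hby] at heq
          exact sub_left_injective heq
        · -- j + 1 > k + 1 : both are 0
          show Xseq m k x (j + 1) = Xseq m k y (j + 1)
          simp only [Xseq]
          rw [dif_neg (by omega), dif_neg (by omega)]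
  funext i
  have h := key (k + 1) (i + 1) (by omega)
  simp only [Xseq] at h
  rw [dif_pos ⟨by omega, by omega⟩, dif_pos ⟨by omega, by omega⟩] at h
  simpa using h
end

section
/- With p as defined (sending x to the partitioned word whose block x_{i-1} receives the letter x_i - x_{i-1} in order of i, with x_0 = 0), the following recovery algorithm inverts p: start at block t = 0; repeatedly remove the leftmost remaining letter v of block t, output t + v, and set t := t + v; then the sequence of outputs equals x_1, x_2, ..., x_{k+1}, and the algorithm empties all blocks without ever attempting to read from an empty block. -/
/-- The recovery algorithm: starting at block `t`, repeatedly remove the leftmost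
letter `v` of the current block, output `t + v`, and move to block `t + v`.
It returns `none` if it ever attempts to read from an empty block; otherwise it
returns the list of outputs together with the final state of the blocks. -/
def recover (m : ℕ) : ℕ → ZMod m → (ZMod m → List (ZMod m)) →
    Option (List (ZMod m) × (ZMod m → List (ZMod m)))
  | 0, _, B => some ([], B)
  | n + 1, t, B =>
    match B t with
    | [] => none
    | v :: rest =>
      (recover m n (t + v) (Function.update B t rest)).map
        (fun r => ((t + v) :: r.1, r.2))

/-
Read `x` as a walk `X 0 = 0, X 1 = x₁, …, X (k+1) = x_{k+1}` on `ZMod m`; block `b` of `p x`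
lists, in order, the steps `X (i+1) - X i` taken out of the positions `i ≤ k` with `X i = b`.
Peeling off the first step of the walk removes exactly the leftmost letter of block `X 0`, and
leaves the blocks of the remaining walk, which starts at `X 0 + (X 1 - X 0) = X 1`. So the
algorithm, by induction on the length of the walk, retraces it and consumes every letter.
-/

section StepBlocks

variable {G : Type*} [Sub G] [DecidableEq G]

def stepBlocks (X : ℕ → G) (s : List ℕ) : G → List G :=
  fun b => (s.filter (fun i => decide (X i = b))).map (fun i => X (i + 1) - X i)

lemma stepBlocks_cons (X : ℕ → G) (i : ℕ) (s : List ℕ) :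
    stepBlocks X (i :: s) =
      Function.update (stepBlocks X s) (X i) ((X (i + 1) - X i) :: stepBlocks X s (X i)) := by
  funext b
  by_cases hb : b = X i
  · subst hb
    simp [stepBlocks]
  · simp [stepBlocks, hb, Ne.symm hb]

end StepBlocks

lemma recover_stepBlocks_range' {m : ℕ} (X : ℕ → ZMod m) (n j : ℕ) :
    recover m n (X j) (stepBlocks X (List.range' j n)) =
      some ((List.range' (j + 1) n).map X, fun _ => []) := by
  induction n generalizing j with
  | zero => rfl
  | succ n ih =>
    have hstep : X j + (X (j + 1) - X j) = X (j + 1) := add_sub_cancel _ _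
    rw [List.range'_succ, stepBlocks_cons, recover, Function.update_self]
    simp only [Function.update_idem, Function.update_eq_self, hstep, ih, Option.map_some,
      List.range'_succ, List.map_cons]

lemma pMap_eq_stepBlocks (m k : ℕ) (x : Fin (k + 1) → ZMod m) :
    pMap m k x = stepBlocks (Xseq m k x) (List.range' 0 (k + 1)) := by
  rw [← List.range_eq_range']
  rfl

lemma map_range'_Xseq (m k : ℕ) (x : Fin (k + 1) → ZMod m) :
    (List.range' 1 (k + 1)).map (Xseq m k x) = List.ofFn x := by
  apply List.ext_getElem (by simp)
  intro i hi _
  have hik : i < k + 1 := by simpa using hi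
  simp only [List.getElem_map, List.getElem_range', List.getElem_ofFn, Xseq,
    dif_pos (show 1 ≤ 1 + 1 * i ∧ 1 + 1 * i ≤ k + 1 by omega)]
  congr 1
  ext
  simp

theorem recover_pMap_general (m k : ℕ) (x : Fin (k + 1) → ZMod m) :
    recover m (k + 1) 0 (pMap m k x) = some (List.ofFn x, fun _ => []) := by
  have hstart : Xseq m k x 0 = 0 := by simp [Xseq]
  rw [pMap_eq_stepBlocks, ← hstart, recover_stepBlocks_range', map_range'_Xseq]

/-- The recovery algorithm inverts `p`: applied to `p x` starting at block `0`,
it never reads from an empty block, outputs exactly `x₁, …, x_{k+1}`, and empties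
all blocks. -/
theorem recover_pMap (m k : ℕ) (hm : 1 ≤ m) (x : Fin (k + 1) → ZMod m) :
    recover m (k + 1) 0 (pMap m k x) = some (List.ofFn x, fun _ => []) :=
  recover_pMap_general m k x
end

section
/- Let φ act on words x of length k over {0,...,m-1} as follows: form the extended word of length (k+1)m given by x·(m-1)·(x-1)·(m-2)·...·(x-m+1)·0 (each block is x with i subtracted mod m followed by m-1-i), rotate it cyclically left so that its leftmost 0 becomes the last character, and take the first k letters of the result. Then φ^{k+1} is the identity on the set of all m^k words of length k. -/
/-!
The extended word `E x` is `w (w - 1) ⋯ (w - (m - 1))` with `w = x (m - 1)`, so rotating it by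
`k + 1` subtracts `1` from every letter. Conversely, a word of length `m (k + 1)` with this
property is determined by its first `k + 1` letters, and if it ends in `0` its `(k + 1)`-st letter
is `m - 1`. The property survives every rotation, so rotating `E x` past its first `0` yields
`E (φ x)`: under `E`, `φ` becomes "rotate past the next `0`". As `E x` contains exactly `k + 1`
zeros, the last one at its end, `k + 1` such rotations give back `E x`, hence `x`.
-/

/-- The extended word `x̄ = (x)(m-1)(x-1)(m-2)⋯(x-m+1)(0)` of a word `x` of length
`k` over `ℤ/mℤ`: the concatenation of the blocks `(x - i)(m-1-i)` for `i = 0,…,m-1`. -/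
def extWord (m k : ℕ) (x : Fin k → ZMod m) : List (ZMod m) :=
  (List.range m).flatMap
    (fun (i : ℕ) => (List.ofFn x).map (fun a => a - (i : ZMod m)) ++ [((m - 1 - i : ℕ) : ZMod m)])

/-- The cyclic action `φ`: rotate the extended word left so that its leftmost `0`
becomes the last character, and take the first `k` letters. -/
def phi (m k : ℕ) (x : Fin k → ZMod m) : Fin k → ZMod m :=
  fun j => ((extWord m k x).rotate ((extWord m k x).idxOf 0 + 1)).getD (j : ℕ) 0

namespace List

variable {α : Type*}

section RotatePast

variable [BEq α] [LawfulBEq α]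

def rotatePast (a : α) (l : List α) : List α :=
  l.rotate (l.idxOf a + 1)

theorem rotatePast_append_cons {a : α} {u : List α} (hu : a ∉ u) (v : List α) :
    rotatePast a (u ++ a :: v) = v ++ (u ++ [a]) := by
  rw [rotatePast, idxOf_append_of_notMem hu, idxOf_cons_self,
    show u ++ a :: v = u ++ [a] ++ v by simp]
  simpa using rotate_append_length_eq (u ++ [a]) v

theorem getLast?_rotatePast {a : α} {l : List α} (h : a ∈ l) :
    (rotatePast a l).getLast? = some a := by
  obtain ⟨u, v, rfl, hu⟩ := eq_append_cons_of_mem h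
  simp [rotatePast_append_cons hu]

theorem rotatePast_iterate_count_append (a : α) (l r : List α) :
    (rotatePast a)^[l.count a + 1] (l ++ a :: r) = r ++ (l ++ [a]) := by
  induction hn : l.count a generalizing l r with
  | zero => exact rotatePast_append_cons (count_eq_zero.1 hn) r
  | succ n ih =>
    obtain ⟨u, v, rfl, hu⟩ := eq_append_cons_of_mem (count_pos_iff.1 (by omega : 0 < l.count a))
    have hv : v.count a = n := by simp [count_eq_zero.2 hu] at hn; omega
    rw [Function.iterate_succ_apply, append_assoc, cons_append, rotatePast_append_cons hu,
      append_assoc, cons_append, ih v _ hv]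
    simp

theorem rotatePast_iterate_count {a : α} {l : List α} (hl : l.getLast? = some a) :
    (rotatePast a)^[l.count a] l = l := by
  obtain ⟨l, rfl⟩ := getLast?_eq_some_iff.1 hl
  simpa using rotatePast_iterate_count_append a l []

end RotatePast

section IterBlocks

variable (f : α → α)

def iterBlocks : ℕ → List α → List α
  | 0, _ => []
  | c + 1, w => w ++ iterBlocks c (w.map f)

@[simp] theorem iterBlocks_zero (w : List α) : iterBlocks f 0 w = [] := rfl

theorem iterBlocks_succ (c : ℕ) (w : List α) :
    iterBlocks f (c + 1) w = w ++ iterBlocks f c (w.map f) := rfl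

variable {f}

@[simp] theorem length_iterBlocks (c : ℕ) (w : List α) :
    (iterBlocks f c w).length = c * w.length := by
  induction c generalizing w with
  | zero => simp
  | succ c ih => simp [iterBlocks_succ, ih, Nat.succ_mul, Nat.add_comm]

theorem iterBlocks_succ' (c : ℕ) (w : List α) :
    iterBlocks f (c + 1) w = iterBlocks f c w ++ w.map f^[c] := by
  induction c generalizing w with
  | zero => simp [iterBlocks_succ]
  | succ c ih =>
    rw [iterBlocks_succ, ih, iterBlocks_succ, append_assoc, map_map, ← Function.iterate_succ]

theorem iterBlocks_eq_flatMap (c : ℕ) (w : List α) :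
    iterBlocks f c w = (range c).flatMap fun i => w.map f^[i] := by
  induction c generalizing w with
  | zero => simp
  | succ c ih =>
    simp [iterBlocks_succ, ih, range_succ_eq_map, flatMap_map, map_map, Function.iterate_succ]

@[simp] theorem iterBlocks_nil (c : ℕ) : iterBlocks f c [] = [] := by
  induction c with
  | zero => rfl
  | succ c ih => simpa [iterBlocks_succ]

theorem getLast?_iterBlocks_succ (c : ℕ) (w : List α) :
    (iterBlocks f (c + 1) w).getLast? = w.getLast?.map f^[c] := by
  rcases w.eq_nil_or_concat with rfl | ⟨v, b, rfl⟩ <;> simp [iterBlocks_succ']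

theorem map_iterBlocks (c : ℕ) (w : List α) :
    (iterBlocks f c w).map f = iterBlocks f c (w.map f) := by
  induction c generalizing w with
  | zero => rfl
  | succ c ih => simp only [iterBlocks_succ, map_append, ih]

theorem rotate_iterBlocks {c : ℕ} (hf : f^[c] = id) (w : List α) :
    (iterBlocks f c w).rotate w.length = (iterBlocks f c w).map f := by
  cases c with
  | zero => simp
  | succ c =>
    rw [map_iterBlocks, iterBlocks_succ, rotate_append_length_eq, iterBlocks_succ', map_map,
      ← Function.iterate_succ, hf, map_id]

theorem eq_iterBlocks_take_of_drop_prefix {c n : ℕ} {l : List α} (hl : l.length = c * n)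
    (h : l.drop n <+: l.map f) : l = iterBlocks f c (l.take n) := by
  induction c generalizing l with
  | zero => simpa using hl
  | succ c ih =>
    have hd : (l.drop n).length = c * n := by simp [hl, Nat.succ_mul]
    conv_lhs => rw [← take_append_drop n l, ih hd (by simpa using h.drop n)]
    rw [iterBlocks_succ]
    congr 1
    rcases c with _ | c
    · rfl
    rw [prefix_iff_eq_take.1 h, take_take, ← map_take,
      Nat.min_eq_left (by simp [hd, Nat.succ_mul])]

theorem eq_iterBlocks_take_of_rotate {c n : ℕ} {l : List α} (hl : l.length = c * n)
    (h : l.rotate n = l.map f) : l = iterBlocks f c (l.take n) := by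
  refine eq_iterBlocks_take_of_drop_prefix hl ?_
  rcases c with _ | c
  · simp_all
  rw [← h, rotate_eq_drop_append_take (by simp [hl, Nat.succ_mul])]
  exact prefix_append _ _

theorem rotate_rotate_eq_map {n : ℕ} {l : List α} (h : l.rotate n = l.map f) (j : ℕ) :
    (l.rotate j).rotate n = (l.rotate j).map f := by
  rw [rotate_rotate, Nat.add_comm, ← rotate_rotate, h, map_rotate]

end IterBlocks

end List

theorem sub_one_iterate {G : Type*} [AddGroupWithOne G] (n : ℕ) :
    (· - 1 : G → G)^[n] = (· - (n : G)) := by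
  induction n with
  | zero => ext; simp
  | succ n ih =>
    ext a
    rw [Function.iterate_succ_apply, ih, Nat.cast_succ, sub_add_eq_sub_sub_swap]

theorem ZMod.sub_one_iterate_self (m : ℕ) : (fun a : ZMod m => a - 1)^[m] = id := by
  rw [sub_one_iterate, ZMod.natCast_self]
  exact funext sub_zero

theorem ZMod.sum_range_count_natCast (m : ℕ) [NeZero m] (w : List (ZMod m)) :
    ∑ i ∈ Finset.range m, w.count (i : ZMod m) = w.length := by
  calc ∑ i ∈ Finset.range m, w.count (i : ZMod m) = ∑ a : ZMod m, w.count a :=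
        Finset.sum_nbij' (↑) ZMod.val (by simp) (by simp [ZMod.val_lt])
          (fun i hi => ZMod.val_cast_of_lt (Finset.mem_range.1 hi)) (by simp) (by simp)
    _ = w.length := by
      simpa using Multiset.sum_count_eq_card (s := Finset.univ) (m := (w : Multiset (ZMod m)))
        (by simp)

open List

theorem extWord_eq_iterBlocks (m k : ℕ) (x : Fin k → ZMod m) :
    extWord m k x = iterBlocks (· - 1) m (ofFn x ++ [((m - 1 : ℕ) : ZMod m)]) := by
  rw [extWord, iterBlocks_eq_flatMap]
  refine flatMap_congr fun i hi => ?_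
  simp [Function.comp_def, sub_one_iterate, Nat.cast_sub (Nat.le_sub_one_of_lt (mem_range.1 hi))]

theorem count_zero_extWord (m k : ℕ) [NeZero m] (x : Fin k → ZMod m) :
    (extWord m k x).count 0 = k + 1 := by
  have hblock (w : List (ZMod m)) (i : ℕ) :
      (w.map (· - 1)^[i]).count 0 = w.count (i : ZMod m) := by
    rw [sub_one_iterate, ← sub_self (i : ZMod m),
      ← count_map_of_injective w (· - (i : ZMod m)) sub_left_injective]
  rw [extWord_eq_iterBlocks, iterBlocks_eq_flatMap, count_flatMap, Function.comp_def]
  simp only [hblock]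
  rw [← sum_toFinset _ nodup_range, toFinset_range, ZMod.sum_range_count_natCast]
  simp

theorem getLast?_extWord (m k : ℕ) [NeZero m] (x : Fin k → ZMod m) :
    (extWord m k x).getLast? = some 0 := by
  obtain ⟨m, rfl⟩ := Nat.exists_eq_succ_of_ne_zero (NeZero.ne m)
  simp [extWord_eq_iterBlocks, getLast?_iterBlocks_succ, sub_one_iterate]

theorem take_extWord (m k : ℕ) [NeZero m] (x : Fin k → ZMod m) :
    (extWord m k x).take k = ofFn x := by
  obtain ⟨m, rfl⟩ := Nat.exists_eq_succ_of_ne_zero (NeZero.ne m)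
  rw [extWord_eq_iterBlocks, iterBlocks_succ, append_assoc, take_left' (length_ofFn)]

theorem extWord_injective (m k : ℕ) [NeZero m] : Function.Injective (extWord m k) := fun x y h =>
  ofFn_injective (by rw [← take_extWord m k x, h, take_extWord])

theorem length_extWord (m k : ℕ) (x : Fin k → ZMod m) :
    (extWord m k x).length = m * (k + 1) := by
  simp [extWord_eq_iterBlocks]

theorem rotate_extWord (m k : ℕ) (x : Fin k → ZMod m) :
    (extWord m k x).rotate (k + 1) = (extWord m k x).map (· - 1) := by
  simpa [extWord_eq_iterBlocks] using
    rotate_iterBlocks (ZMod.sub_one_iterate_self m) (ofFn x ++ [((m - 1 : ℕ) : ZMod m)])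

theorem eq_extWord_of_rotate {m k : ℕ} [NeZero m] {l : List (ZMod m)}
    (hlen : l.length = m * (k + 1)) (hrot : l.rotate (k + 1) = l.map (· - 1))
    (hlast : l.getLast? = some 0) :
    l = extWord m k (fun j => l.getD j 0) := by
  have hk : k < l.length := by rw [hlen]; nlinarith [NeZero.pos m]
  have hblocks : l = iterBlocks (· - 1) m (l.take (k + 1)) :=
    eq_iterBlocks_take_of_rotate hlen hrot
  -- the last block of `iterBlocks (· - 1) m v` is `v + 1`, and it ends in `0`
  have hlk : l[k] = ((m - 1 : ℕ) : ZMod m) := by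
    obtain ⟨m, rfl⟩ := Nat.exists_eq_succ_of_ne_zero (NeZero.ne m)
    rw [hblocks, getLast?_iterBlocks_succ, getLast?_take, if_neg (Nat.add_one_ne_zero k),
      Nat.add_sub_cancel, getElem?_eq_getElem hk] at hlast
    simpa [sub_one_iterate, sub_eq_zero] using hlast
  have htake : l.take k = ofFn (fun j : Fin k => l.getD j 0) :=
    ext_getElem (by simp; omega) fun j _ _ => by
      rw [getElem_take, List.getElem_ofFn, getD_eq_getElem]
  calc l = iterBlocks (· - 1) m (l.take (k + 1)) := hblocks
    _ = extWord m k (fun j => l.getD j 0) := by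
      rw [extWord_eq_iterBlocks, ← htake, ← hlk, take_add_one, getElem?_eq_getElem hk,
        Option.toList_some]

theorem extWord_phi (m k : ℕ) [NeZero m] (y : Fin k → ZMod m) :
    extWord m k (phi m k y) = rotatePast 0 (extWord m k y) :=
  (eq_extWord_of_rotate (by simp [length_extWord])
    (rotate_rotate_eq_map (rotate_extWord m k y) _)
    (getLast?_rotatePast (mem_of_getLast? (getLast?_extWord m k y)))).symm

theorem phi_order_general (m k : ℕ) (hm : 1 ≤ m) (x : Fin k → ZMod m) :
    (phi m k)^[k + 1] x = x := by
  have : NeZero m := ⟨by omega⟩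
  have hsemi : Function.Semiconj (extWord m k) (phi m k) (rotatePast 0) := extWord_phi m k
  apply extWord_injective m k
  rw [hsemi.iterate_right, ← count_zero_extWord m k x,
    rotatePast_iterate_count (getLast?_extWord m k x)]

/-- `φ` has order dividing `k+1`: `φ^{k+1}` is the identity on words of length `k`. -/
theorem phi_order (m k : ℕ) (hm : 1 ≤ m) (hk : 1 ≤ k) (x : Fin k → ZMod m) :
    (phi m k)^[k + 1] x = x :=
  phi_order_general m k hm x
end
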